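/- arXiv:2211.13570 — 6 statements merged into one kernel-verified Lean document; each statement's English description precedes it below -/
import Mathlib

section
/- For all complex s with Re(s) > 1, the Dirichlet series ∑_{n≥1} ε_{n-1}/n^s converges and equals (1 - 2^s)/(1 + 2^s) · ∑_{n≥1} ε_n/n^s. -/
open Complex

/-- The Thue-Morse sequence: binary digit sum of `n` modulo 2. -/
def tm (n : ℕ) : ℕ := (Nat.digits 2 n).sum % 2

/-- The ±1 Thue-Morse sequence `ε n = (-1)^(t n)`. -/
noncomputable def eps (n : ℕ) : ℂ := (-1) ^ tm n

lemma eps_eq (n : ℕ) : eps n = (-1) ^ (Nat.digits 2 n).sum := by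
  rw [eps, tm, ← neg_one_pow_eq_pow_mod_two]

lemma eps_two_mul (n : ℕ) : eps (2 * n) = eps n := by
  rcases Nat.eq_zero_or_pos n with h | h
  · simp [h]
  · rw [eps_eq, eps_eq, Nat.digits_def' (by norm_num : 1 < 2) (by omega)]
    simp [Nat.mul_div_cancel_left _ (by norm_num : 0 < 2), Nat.mul_mod_right]

lemma eps_two_mul_add_one (n : ℕ) : eps (2 * n + 1) = -eps n := by
  rw [eps_eq, eps_eq, Nat.digits_def' (by norm_num : 1 < 2) (by omega)]
  have h1 : (2 * n + 1) % 2 = 1 := by omega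
  have h2 : (2 * n + 1) / 2 = n := by omega
  rw [h1, h2]
  simp [pow_succ, pow_add, mul_comm]

lemma norm_eps (n : ℕ) : ‖eps n‖ = 1 := by
  rw [eps]; simp

lemma summable_aux (s : ℂ) (hs : 1 < s.re) (c : ℕ → ℂ) (hc : ∀ n, ‖c n‖ ≤ 1) :
    Summable (fun n : ℕ => c n / ((n : ℂ) + 1) ^ s) := by
  have hsum : Summable (fun n : ℕ => (((n : ℝ) + 1) ^ s.re)⁻¹) := by
    have := (Real.summable_nat_rpow_inv.mpr hs).comp_injective Nat.succ_injective
    refine this.congr (fun n => ?_)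
    push_cast [Function.comp]
    norm_num
  apply Summable.of_norm_bounded hsum
  intro n
  have hpos : (0 : ℝ) < (n : ℝ) + 1 := by positivity
  have hcast : ((n : ℂ) + 1) = (((n : ℝ) + 1 : ℝ) : ℂ) := by push_cast; ring
  simp only [norm_div, hcast]
  rw [Complex.norm_cpow_eq_rpow_re_of_pos hpos]
  rw [div_eq_mul_inv]
  calc ‖c n‖ * (((n : ℝ) + 1) ^ s.re)⁻¹ ≤ 1 * (((n : ℝ) + 1) ^ s.re)⁻¹ := by
        gcongr; exact hc n
    _ = (((n : ℝ) + 1) ^ s.re)⁻¹ := one_mul _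

lemma two_mul_cpow (k : ℕ) (s : ℂ) :
    ((2 : ℂ) * k + 2) ^ s = 2 ^ s * ((k : ℂ) + 1) ^ s := by
  have h : ((2 : ℂ) * k + 2) = (((2 : ℝ) : ℂ)) * (((k : ℝ) + 1 : ℝ) : ℂ) := by
    push_cast; ring
  rw [h, Complex.mul_cpow_ofReal_nonneg (by norm_num) (by positivity)]
  norm_num

theorem stmt_0 (s : ℂ) (hs : 1 < s.re) :
    Summable (fun n : ℕ => eps n / ((n : ℂ) + 1) ^ s) ∧
    ∑' n : ℕ, eps n / ((n : ℂ) + 1) ^ s =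
      (1 - 2 ^ s) / (1 + 2 ^ s) * ∑' n : ℕ, eps (n + 1) / ((n : ℂ) + 1) ^ s := by
  set f : ℕ → ℂ := fun n => eps n / ((n : ℂ) + 1) ^ s with hf
  set g : ℕ → ℂ := fun n => eps (n + 1) / ((n : ℂ) + 1) ^ s with hg
  have hsf : Summable f := summable_aux s hs _ (fun n => (norm_eps n).le)
  have hsg : Summable g := summable_aux s hs _ (fun n => (norm_eps (n + 1)).le)
  refine ⟨hsf, ?_⟩
  have h2s : (2 : ℂ) ^ s ≠ 0 := by
    rw [Ne, Complex.cpow_eq_zero_iff]; norm_num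
  have habs : ‖(2 : ℂ) ^ s‖ = (2 : ℝ) ^ s.re := by
    have : ((2 : ℂ)) = (((2 : ℝ)) : ℂ) := by norm_num
    rw [this, Complex.norm_cpow_eq_rpow_re_of_pos (by norm_num)]
  have habs_gt : 1 < ‖(2 : ℂ) ^ s‖ := by
    rw [habs]
    calc (1 : ℝ) < 2 ^ (1 : ℝ) := by norm_num
      _ ≤ 2 ^ s.re := by
        apply Real.rpow_le_rpow_left_iff (by norm_num : (1:ℝ) < 2) |>.mpr hs.le
  have hne : (1 : ℂ) + 2 ^ s ≠ 0 := by
    intro h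
    have : (2 : ℂ) ^ s = -1 := by linear_combination h
    rw [this] at habs_gt; simp at habs_gt
  -- even/odd pieces of f
  have hfe : Summable (fun k => f (2 * k)) :=
    hsf.comp_injective (mul_right_injective₀ two_ne_zero)
  have hfo : Summable (fun k => f (2 * k + 1)) :=
    hsf.comp_injective ((add_left_injective 1).comp (mul_right_injective₀ two_ne_zero))
  have hge : Summable (fun k => g (2 * k)) :=
    hsg.comp_injective (mul_right_injective₀ two_ne_zero)
  have hgo : Summable (fun k => g (2 * k + 1)) :=
    hsg.comp_injective ((add_left_injective 1).comp (mul_right_injective₀ two_ne_zero))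
  set F := ∑' n, f n with hF
  set G := ∑' n, g n with hG
  set A := ∑' k, f (2 * k) with hA
  -- pointwise identities
  have hfo_eq : ∀ k, f (2 * k + 1) = -(((2:ℂ) ^ s)⁻¹ * f k) := by
    intro k
    simp only [hf]
    push_cast
    rw [show ((2:ℂ) * k + 1 + 1) = (2 * k + 2) by ring, two_mul_cpow, eps_two_mul_add_one]
    field_simp
  have hge_eq : ∀ k, g (2 * k) = -f (2 * k) := by
    intro k
    simp only [hf, hg]
    rw [eps_two_mul_add_one, eps_two_mul]
    push_cast
    ring
  have hgo_eq : ∀ k, g (2 * k + 1) = ((2:ℂ) ^ s)⁻¹ * g k := by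
    intro k
    simp only [hg]
    push_cast
    rw [show ((2:ℂ) * k + 1 + 1) = (2 * k + 2) by ring, two_mul_cpow,
      show (2 * k + 1 + 1 : ℕ) = 2 * (k + 1) by ring, eps_two_mul]
    field_simp
  -- sum identities
  have hFsplit : A + ∑' k, f (2 * k + 1) = F := tsum_even_add_odd hfe hfo
  have hfo_sum : ∑' k, f (2 * k + 1) = -(((2:ℂ) ^ s)⁻¹ * F) := by
    rw [tsum_congr hfo_eq, tsum_neg, tsum_mul_left]
  have hGsplit : (∑' k, g (2 * k)) + ∑' k, g (2 * k + 1) = G := tsum_even_add_odd hge hgo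
  have hge_sum : ∑' k, g (2 * k) = -A := by rw [tsum_congr hge_eq, tsum_neg]
  have hgo_sum : ∑' k, g (2 * k + 1) = ((2:ℂ) ^ s)⁻¹ * G := by
    rw [tsum_congr hgo_eq, tsum_mul_left]
  rw [hfo_sum] at hFsplit
  rw [hge_sum, hgo_sum] at hGsplit
  -- from hFsplit : A - (2^s)⁻¹ F = F ; from hGsplit : -A + (2^s)⁻¹ G = G
  have key : F * (1 + 2 ^ s) = (1 - 2 ^ s) * G := by
    have h1 : A = F + ((2:ℂ) ^ s)⁻¹ * F := by linear_combination hFsplit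
    have h2 : A = ((2:ℂ) ^ s)⁻¹ * G - G := by linear_combination -hGsplit
    have h3 : F + ((2:ℂ) ^ s)⁻¹ * F = ((2:ℂ) ^ s)⁻¹ * G - G := h1 ▸ h2
    field_simp at h3
    linear_combination h3
  rw [div_mul_eq_mul_div, eq_div_iff hne]
  linear_combination key
end

section
/- For all complex s with Re(s) > 1, (2^s + 1)·∑_{n≥1} t_{n-1}/n^s + (2^s − 1)·∑_{n≥1} t_n/n^s = 2^s · ζ(s). -/
open Complex

lemma tm_two_mul (n : ℕ) : tm (2 * n) = tm n := by
  rcases Nat.eq_zero_or_pos n with h | h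
  · simp [h]
  · unfold tm
    rw [Nat.digits_def' (by norm_num : 1 < 2) (by omega)]
    simp [Nat.mul_div_cancel_left, Nat.mul_mod_right]

lemma tm_two_mul_add_one (n : ℕ) : tm (2 * n + 1) = (tm n + 1) % 2 := by
  unfold tm
  rw [Nat.digits_def' (by norm_num : 1 < 2) (by omega)]
  have h1 : (2 * n + 1) % 2 = 1 := by omega
  have h2 : (2 * n + 1) / 2 = n := by omega
  rw [h1, h2, List.sum_cons]
  omega

lemma tm_lt_two (n : ℕ) : tm n < 2 := Nat.mod_lt _ (by norm_num)

lemma tm_cast_odd (n : ℕ) : (tm (2 * n + 1) : ℂ) = 1 - (tm n : ℂ) := by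
  have h := tm_two_mul_add_one n
  have h2 := tm_lt_two n
  interval_cases h3 : tm n <;> rw [h] <;> norm_num

lemma cpow_aux (s : ℂ) (k : ℕ) : (2 * (k : ℂ) + 2) ^ s = 2 ^ s * ((k : ℂ) + 1) ^ s := by
  have h : (2 * (k : ℂ) + 2) = ((2 : ℝ) : ℂ) * (((k : ℝ) + 1 : ℝ) : ℂ) := by push_cast; ring
  rw [h, mul_cpow_ofReal_nonneg (by norm_num) (by positivity)]
  push_cast
  ring

theorem stmt_6 (s : ℂ) (hs : 1 < s.re) :
    (2 ^ s + 1) * (∑' n : ℕ, (tm n : ℂ) / ((n : ℂ) + 1) ^ s) +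
      (2 ^ s - 1) * (∑' n : ℕ, (tm (n + 1) : ℂ) / ((n : ℂ) + 1) ^ s) =
    2 ^ s * riemannZeta s := by
  set w : ℂ := 2 ^ s with hw_def
  have hw : w ≠ 0 := by
    rw [hw_def, Ne, cpow_eq_zero_iff]
    simp
  -- basic summability
  have hz : Summable (fun n : ℕ => 1 / ((n : ℂ) + 1) ^ s) := by
    have h0 : Summable (fun n : ℕ => 1 / (n : ℂ) ^ s) :=
      Complex.summable_one_div_nat_cpow.mpr hs
    have h1 : Summable (fun n : ℕ => 1 / (((n + 1 : ℕ) : ℂ)) ^ s) :=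
      (summable_nat_add_iff (f := fun n : ℕ => 1 / (n : ℂ) ^ s) 1).mpr h0
    exact h1.congr fun n => by push_cast; ring_nf
  have hbound : ∀ (c : ℕ → ℕ), (∀ n, c n ≤ 1) →
      Summable (fun n : ℕ => (c n : ℂ) / ((n : ℂ) + 1) ^ s) := by
    intro c hc
    apply Summable.of_norm_bounded hz.norm
    intro n
    have : (c n : ℂ) / ((n : ℂ) + 1) ^ s = (c n : ℂ) * (1 / ((n : ℂ) + 1) ^ s) := by ring
    rw [this, norm_mul]
    have h1 : ‖(c n : ℂ)‖ ≤ 1 := by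
      rw [Complex.norm_natCast]
      exact_mod_cast hc n
    calc ‖(c n : ℂ)‖ * ‖1 / ((n : ℂ) + 1) ^ s‖ ≤ 1 * ‖1 / ((n : ℂ) + 1) ^ s‖ :=
          mul_le_mul_of_nonneg_right h1 (norm_nonneg _)
      _ = ‖1 / ((n : ℂ) + 1) ^ s‖ := one_mul _
  have hA : Summable (fun n : ℕ => (tm n : ℂ) / ((n : ℂ) + 1) ^ s) :=
    hbound tm fun n => Nat.lt_succ_iff.mp (tm_lt_two n)
  have hB : Summable (fun n : ℕ => (tm (n + 1) : ℂ) / ((n : ℂ) + 1) ^ s) :=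
    hbound (fun n => tm (n + 1)) fun n => Nat.lt_succ_iff.mp (tm_lt_two (n + 1))
  have hinj2 : Function.Injective (fun k : ℕ => 2 * k) := fun a b h => by
    dsimp only at h; omega
  have hinj2' : Function.Injective (fun k : ℕ => 2 * k + 1) := fun a b h => by
    dsimp only at h; omega
  -- names
  set Z := ∑' n : ℕ, 1 / ((n : ℂ) + 1) ^ s with hZ_def
  set A := ∑' n : ℕ, (tm n : ℂ) / ((n : ℂ) + 1) ^ s with hA_def
  set B := ∑' n : ℕ, (tm (n + 1) : ℂ) / ((n : ℂ) + 1) ^ s with hB_def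
  set C := ∑' k : ℕ, (tm k : ℂ) / (2 * (k : ℂ) + 1) ^ s with hC_def
  set D := ∑' k : ℕ, 1 / (2 * (k : ℂ) + 1) ^ s with hD_def
  -- equation for Z
  have eqZ : w * Z = w * D + Z := by
    have he : Summable (fun k : ℕ => 1 / (((2 * k : ℕ) : ℂ) + 1) ^ s) :=
      hz.comp_injective hinj2
    have ho : Summable (fun k : ℕ => 1 / (((2 * k + 1 : ℕ) : ℂ) + 1) ^ s) :=
      hz.comp_injective hinj2'
    have split := tsum_even_add_odd (f := fun n : ℕ => 1 / ((n : ℂ) + 1) ^ s) he ho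
    have h1 : ∑' k : ℕ, 1 / (((2 * k : ℕ) : ℂ) + 1) ^ s = D := by
      apply tsum_congr; intro k; push_cast; ring_nf
    have h2 : ∑' k : ℕ, 1 / (((2 * k + 1 : ℕ) : ℂ) + 1) ^ s = w⁻¹ * Z := by
      rw [← tsum_mul_left]
      apply tsum_congr; intro k
      have : (((2 * k + 1 : ℕ) : ℂ) + 1) = 2 * (k : ℂ) + 2 := by push_cast; ring
      rw [this, cpow_aux, ← hw_def]
      rw [one_div, one_div, mul_inv]
      try ring
    rw [h1, h2] at split
    have : Z = D + w⁻¹ * Z := split.symm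
    calc w * Z = w * (D + w⁻¹ * Z) := by rw [← this]
      _ = w * D + (w * w⁻¹) * Z := by ring
      _ = w * D + Z := by rw [mul_inv_cancel₀ hw, one_mul]
  -- equation for A
  have eqA : w * A = w * C + (Z - A) := by
    have he : Summable (fun k : ℕ => (tm (2 * k) : ℂ) / (((2 * k : ℕ) : ℂ) + 1) ^ s) :=
      hA.comp_injective hinj2
    have ho : Summable (fun k : ℕ => (tm (2 * k + 1) : ℂ) / (((2 * k + 1 : ℕ) : ℂ) + 1) ^ s) :=
      hA.comp_injective hinj2'
    have split := tsum_even_add_odd (f := fun n : ℕ => (tm n : ℂ) / ((n : ℂ) + 1) ^ s) he ho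
    have h1 : ∑' k : ℕ, (tm (2 * k) : ℂ) / (((2 * k : ℕ) : ℂ) + 1) ^ s = C := by
      apply tsum_congr; intro k
      rw [tm_two_mul]; push_cast; ring_nf
    have h2 : ∑' k : ℕ, (tm (2 * k + 1) : ℂ) / (((2 * k + 1 : ℕ) : ℂ) + 1) ^ s
        = w⁻¹ * (Z - A) := by
      rw [hZ_def, hA_def, ← Summable.tsum_sub hz hA, ← tsum_mul_left]
      apply tsum_congr; intro k
      have hb : (((2 * k + 1 : ℕ) : ℂ) + 1) = 2 * (k : ℂ) + 2 := by push_cast; ring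
      rw [tm_cast_odd, hb, cpow_aux, ← hw_def, div_eq_mul_inv, mul_inv]
      ring
    rw [h1, h2] at split
    have : A = C + w⁻¹ * (Z - A) := split.symm
    calc w * A = w * (C + w⁻¹ * (Z - A)) := by rw [← this]
      _ = w * C + (w * w⁻¹) * (Z - A) := by ring
      _ = w * C + (Z - A) := by rw [mul_inv_cancel₀ hw, one_mul]
  -- equation for B
  have eqB : w * B = w * (D - C) + B := by
    have he : Summable (fun k : ℕ => (tm (2 * k + 1) : ℂ) / (((2 * k : ℕ) : ℂ) + 1) ^ s) :=
      hB.comp_injective hinj2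
    have ho : Summable (fun k : ℕ => (tm (2 * k + 1 + 1) : ℂ) / (((2 * k + 1 : ℕ) : ℂ) + 1) ^ s) :=
      hB.comp_injective hinj2'
    have split := tsum_even_add_odd (f := fun n : ℕ => (tm (n + 1) : ℂ) / ((n : ℂ) + 1) ^ s) he ho
    have h1 : ∑' k : ℕ, (tm (2 * k + 1) : ℂ) / (((2 * k : ℕ) : ℂ) + 1) ^ s = D - C := by
      have hD' : Summable (fun k : ℕ => 1 / (2 * (k : ℂ) + 1) ^ s) := by
        have h0 : Summable (fun k : ℕ => 1 / (((2 * k : ℕ) : ℂ) + 1) ^ s) :=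
          hz.comp_injective hinj2
        exact h0.congr fun k => by push_cast; ring_nf
      have hC' : Summable (fun k : ℕ => (tm k : ℂ) / (2 * (k : ℂ) + 1) ^ s) := by
        have h0 : Summable (fun k : ℕ => (tm (2 * k) : ℂ) / (((2 * k : ℕ) : ℂ) + 1) ^ s) :=
          hA.comp_injective hinj2
        refine h0.congr fun k => ?_
        rw [tm_two_mul]; push_cast; ring_nf
      rw [hD_def, hC_def, ← Summable.tsum_sub hD' hC']
      apply tsum_congr; intro k
      rw [tm_cast_odd]; push_cast; ring_nf
    have h2 : ∑' k : ℕ, (tm (2 * k + 1 + 1) : ℂ) / (((2 * k + 1 : ℕ) : ℂ) + 1) ^ s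
        = w⁻¹ * B := by
      rw [hB_def, ← tsum_mul_left]
      apply tsum_congr; intro k
      have hb : (((2 * k + 1 : ℕ) : ℂ) + 1) = 2 * (k : ℂ) + 2 := by push_cast; ring
      have ht : tm (2 * k + 1 + 1) = tm (k + 1) := by
        have : 2 * k + 1 + 1 = 2 * (k + 1) := by ring
        rw [this, tm_two_mul]
      rw [ht, hb, cpow_aux, ← hw_def, div_eq_mul_inv, mul_inv]
      ring
    rw [h1, h2] at split
    have : B = (D - C) + w⁻¹ * B := split.symm
    calc w * B = w * ((D - C) + w⁻¹ * B) := by rw [← this]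
      _ = w * (D - C) + (w * w⁻¹) * B := by ring
      _ = w * (D - C) + B := by rw [mul_inv_cancel₀ hw, one_mul]
  rw [zeta_eq_tsum_one_div_nat_add_one_cpow hs, ← hZ_def]
  linear_combination eqA + eqB - eqZ
end

section
/- ∑_{n≥1} (5·t_{n-1} + 3·t_n)/n² = 2π²/3. -/
open Complex

/-- Real version of the ±1 Thue–Morse sequence. -/
noncomputable def eR (n : ℕ) : ℝ := (-1) ^ tm n

lemma tm_cases (n : ℕ) : tm n = 0 ∨ tm n = 1 := by
  have := tm_lt_two n; omega

lemma neg_one_pow_mod_two (k : ℕ) : ((-1 : ℝ)) ^ (k % 2) = (-1 : ℝ) ^ k := by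
  conv_rhs => rw [← Nat.div_add_mod k 2, pow_add, pow_mul]
  norm_num

lemma eR_two_mul (n : ℕ) : eR (2 * n) = eR n := by
  unfold eR; rw [tm_two_mul]

lemma eR_two_mul_add_one (n : ℕ) : eR (2 * n + 1) = - eR n := by
  unfold eR
  rw [tm_two_mul_add_one, neg_one_pow_mod_two, pow_succ]
  ring

lemma abs_eR (n : ℕ) : |eR n| = 1 := by
  rcases tm_cases n with h | h <;> simp [eR, h]

lemma tm_cast (n : ℕ) : (tm n : ℝ) = (1 - eR n) / 2 := by
  rcases tm_cases n with h | h <;> norm_num [eR, h]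

theorem stmt_9 :
    ∑' n : ℕ, (5 * (tm n : ℝ) + 3 * (tm (n + 1) : ℝ)) / ((n : ℝ) + 1) ^ 2 =
      2 * Real.pi ^ 2 / 3 := by
  -- the Basel sum, shifted
  have hbasel : HasSum (fun n : ℕ => 1 / ((n : ℝ) + 1) ^ 2) (Real.pi ^ 2 / 6) := by
    have h0 : HasSum (fun n : ℕ => 1 / (((n + 1 : ℕ) : ℝ)) ^ 2) (Real.pi ^ 2 / 6) := by
      rw [hasSum_nat_add_iff (f := fun n : ℕ => 1 / (n : ℝ) ^ 2) 1]
      simpa using hasSum_zeta_two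
    convert h0 using 2 with n
    push_cast; ring
  have hsq : Summable (fun n : ℕ => 1 / ((n : ℝ) + 1) ^ 2) := hbasel.summable
  -- summability of the two Thue–Morse series
  have hbound : ∀ (c : ℕ → ℝ), (∀ n, |c n| = 1) →
      Summable (fun n : ℕ => c n / ((n : ℝ) + 1) ^ 2) := by
    intro c hc
    refine Summable.of_norm_bounded hsq fun n => ?_
    have hpos : (0 : ℝ) < ((n : ℝ) + 1) ^ 2 := by positivity
    rw [Real.norm_eq_abs, abs_div, hc, abs_of_pos hpos]
  have hA : Summable (fun n : ℕ => eR n / ((n : ℝ) + 1) ^ 2) := hbound _ abs_eR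
  have hB : Summable (fun n : ℕ => eR (n + 1) / ((n : ℝ) + 1) ^ 2) :=
    hbound _ (fun n => abs_eR (n + 1))
  have hinj : Function.Injective (fun k : ℕ => 2 * k) :=
    fun a b h => Nat.eq_of_mul_eq_mul_left (by norm_num) h
  have hinj' : Function.Injective (fun k : ℕ => 2 * k + 1) := fun a b h => by
    have h2 : 2 * a + 1 = 2 * b + 1 := h
    omega
  -- A = C - A/4
  have hAeq : (∑' n : ℕ, eR n / ((n : ℝ) + 1) ^ 2)
      = (∑' n : ℕ, eR n / (2 * (n : ℝ) + 1) ^ 2)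
        + (-1 / 4) * ∑' n : ℕ, eR n / ((n : ℝ) + 1) ^ 2 := by
    have he : Summable (fun k : ℕ => eR (2 * k) / (((2 * k : ℕ) : ℝ) + 1) ^ 2) :=
      hA.comp_injective hinj
    have ho : Summable (fun k : ℕ => eR (2 * k + 1) / (((2 * k + 1 : ℕ) : ℝ) + 1) ^ 2) :=
      hA.comp_injective hinj'
    have key := tsum_even_add_odd (f := fun n : ℕ => eR n / ((n : ℝ) + 1) ^ 2) he ho
    beta_reduce at key
    have hC2 : (∑' k : ℕ, eR (2 * k) / (((2 * k : ℕ) : ℝ) + 1) ^ 2)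
        = ∑' n : ℕ, eR n / (2 * (n : ℝ) + 1) ^ 2 := by
      apply tsum_congr; intro k
      rw [eR_two_mul]; push_cast; ring_nf
    have hO : (∑' k : ℕ, eR (2 * k + 1) / (((2 * k + 1 : ℕ) : ℝ) + 1) ^ 2)
        = (-1 / 4) * ∑' n : ℕ, eR n / ((n : ℝ) + 1) ^ 2 := by
      rw [← tsum_mul_left]
      apply tsum_congr; intro k
      rw [eR_two_mul_add_one]; push_cast
      rw [show ((2 : ℝ) * k + 1 + 1) ^ 2 = 4 * ((k : ℝ) + 1) ^ 2 from by ring,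
        div_mul_eq_div_div]
      ring
    rw [hC2, hO] at key
    linarith [key]
  -- B = -C + B/4
  have hBeq : (∑' n : ℕ, eR (n + 1) / ((n : ℝ) + 1) ^ 2)
      = -(∑' n : ℕ, eR n / (2 * (n : ℝ) + 1) ^ 2)
        + (1 / 4) * ∑' n : ℕ, eR (n + 1) / ((n : ℝ) + 1) ^ 2 := by
    have he : Summable (fun k : ℕ => eR (2 * k + 1) / (((2 * k : ℕ) : ℝ) + 1) ^ 2) :=
      hB.comp_injective hinj
    have ho : Summable (fun k : ℕ => eR (2 * k + 1 + 1) / (((2 * k + 1 : ℕ) : ℝ) + 1) ^ 2) :=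
      hB.comp_injective hinj'
    have key := tsum_even_add_odd (f := fun n : ℕ => eR (n + 1) / ((n : ℝ) + 1) ^ 2) he ho
    beta_reduce at key
    have hC2 : (∑' k : ℕ, eR (2 * k + 1) / (((2 * k : ℕ) : ℝ) + 1) ^ 2)
        = -∑' n : ℕ, eR n / (2 * (n : ℝ) + 1) ^ 2 := by
      rw [← tsum_neg]
      apply tsum_congr; intro k
      rw [eR_two_mul_add_one]; push_cast; ring_nf
    have hO : (∑' k : ℕ, eR (2 * k + 1 + 1) / (((2 * k + 1 : ℕ) : ℝ) + 1) ^ 2)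
        = (1 / 4) * ∑' n : ℕ, eR (n + 1) / ((n : ℝ) + 1) ^ 2 := by
      rw [← tsum_mul_left]
      apply tsum_congr; intro k
      have h2 : 2 * k + 1 + 1 = 2 * (k + 1) := by ring
      rw [h2, eR_two_mul]; push_cast
      rw [show ((2 : ℝ) * k + 1 + 1) ^ 2 = 4 * ((k : ℝ) + 1) ^ 2 from by ring,
        div_mul_eq_div_div]
      ring
    rw [hC2, hO] at key
    linarith [key]
  -- rewrite each term
  have hterm : ∀ n : ℕ, (5 * (tm n : ℝ) + 3 * (tm (n + 1) : ℝ)) / ((n : ℝ) + 1) ^ 2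
      = 4 * (1 / ((n : ℝ) + 1) ^ 2) - (5 / 2) * (eR n / ((n : ℝ) + 1) ^ 2)
        - (3 / 2) * (eR (n + 1) / ((n : ℝ) + 1) ^ 2) := by
    intro n
    rw [tm_cast n, tm_cast (n + 1)]
    have hpos : ((n : ℝ) + 1) ^ 2 ≠ 0 := by positivity
    field_simp
    ring
  rw [tsum_congr hterm]
  rw [Summable.tsum_sub (((hsq.mul_left 4).sub (hA.mul_left (5 / 2)))) (hB.mul_left (3 / 2)),
    Summable.tsum_sub (hsq.mul_left 4) (hA.mul_left (5 / 2)), tsum_mul_left, tsum_mul_left,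
    tsum_mul_left, hbasel.tsum_eq]
  linarith [hAeq, hBeq]
end

section
/- Let k, ℓ be real numbers and define q_n = t_n − k and r_n = t_n + ℓ for all n ≥ 0. Then for all complex s with Re(s) > 1, (2^s + 1)·∑_{n≥1} q_{n-1}/n^s + (2^s − 1)·∑_{n≥1} r_n/n^s = ζ(s)·(2^s − (2^s(k − ℓ) + (k + ℓ))). -/
open Complex

lemma tm_le_one (n : ℕ) : tm n ≤ 1 := Nat.lt_succ_iff.mp (Nat.mod_lt _ (by norm_num))

lemma tm_odd (n : ℕ) : tm (2 * n + 1) = 1 - tm n := by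
  have h1 : tm (2 * n + 1) = (1 + (Nat.digits 2 n).sum) % 2 := by
    unfold tm
    rw [Nat.digits_def' (by norm_num : 1 < 2) (by omega)]
    have : (2 * n + 1) / 2 = n := by omega
    rw [this, List.sum_cons]
    congr 2
    omega
  have h2 := tm_le_one n
  unfold tm at *
  omega

lemma summable_div {s : ℂ} (hs : 1 < s.re) (c : ℕ → ℂ) (hc : ∀ n, ‖c n‖ ≤ 1) :
    Summable (fun n : ℕ => c n / ((n : ℂ) + 1) ^ s) := by
  have h0 : Summable (fun n : ℕ => 1 / ((n : ℂ) + 1) ^ s) := by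
    have h1 := ((Complex.summable_one_div_nat_cpow (p := s)).mpr hs).comp_injective
      Nat.succ_injective
    refine h1.congr fun n => ?_
    simp only [Function.comp, Nat.succ_eq_add_one]
    push_cast
    ring_nf
  refine Summable.of_norm_bounded (summable_norm_iff.mpr h0) fun n => ?_
  rw [norm_div, norm_div, norm_one]
  have hne : ((n : ℂ) + 1) ^ s ≠ 0 := by
    rw [Ne, Complex.cpow_eq_zero_iff]
    rintro ⟨h, -⟩
    exact absurd (congrArg Complex.re h) (by simp; positivity)
  have hpos : (0:ℝ) < ‖((n : ℂ) + 1) ^ s‖ := norm_pos_iff.mpr hne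
  gcongr
  exact hc n

theorem stmt_11 (k l : ℝ) (s : ℂ) (hs : 1 < s.re) :
    (2 ^ s + 1) * (∑' n : ℕ, ((tm n : ℂ) - (k : ℂ)) / ((n : ℂ) + 1) ^ s) +
      (2 ^ s - 1) * (∑' n : ℕ, ((tm (n + 1) : ℂ) + (l : ℂ)) / ((n : ℂ) + 1) ^ s) =
    riemannZeta s * (2 ^ s - (2 ^ s * ((k : ℂ) - l) + ((k : ℂ) + l))) := by
  have hw : (2 : ℂ) ^ s ≠ 0 := by
    rw [Ne, Complex.cpow_eq_zero_iff]
    rintro ⟨h, -⟩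
    norm_num at h
  set w : ℂ := 2 ^ s with hw_def
  -- summability
  have hZs : Summable (fun n : ℕ => 1 / ((n : ℂ) + 1) ^ s) :=
    (summable_div hs (fun _ => 1) (fun _ => by simp)).congr fun n => by rw [one_div]
  have hAs : Summable (fun n : ℕ => (tm n : ℂ) / ((n : ℂ) + 1) ^ s) :=
    summable_div hs _ fun n => by
      rw [Complex.norm_natCast]; exact_mod_cast tm_le_one n
  have hBs : Summable (fun n : ℕ => (tm (n + 1) : ℂ) / ((n : ℂ) + 1) ^ s) :=
    summable_div hs _ fun n => by
      rw [Complex.norm_natCast]; exact_mod_cast tm_le_one (n + 1)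
  set Z := ∑' n : ℕ, 1 / ((n : ℂ) + 1) ^ s with hZ_def
  set A := ∑' n : ℕ, (tm n : ℂ) / ((n : ℂ) + 1) ^ s with hA_def
  set B := ∑' n : ℕ, (tm (n + 1) : ℂ) / ((n : ℂ) + 1) ^ s with hB_def
  set C := ∑' m : ℕ, (tm m : ℂ) / (2 * (m : ℂ) + 1) ^ s with hC_def
  set D := ∑' m : ℕ, 1 / (2 * (m : ℂ) + 1) ^ s with hD_def
  have inj2 : Function.Injective (fun k : ℕ => 2 * k) := fun a b h => by
    simp only at h; omega
  have inj2' : Function.Injective (fun k : ℕ => 2 * k + 1) := fun a b h => by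
    simp only at h; omega
  have hpow : ∀ m : ℕ, (2 * (m : ℂ) + 2) ^ s = w * ((m : ℂ) + 1) ^ s := by
    intro m
    have h2 : (2 * (m : ℂ) + 2) = ((2 : ℝ) : ℂ) * (((m : ℝ) + 1 : ℝ) : ℂ) := by
      push_cast; ring
    rw [h2, mul_cpow_ofReal_nonneg (by norm_num) (by positivity)]
    push_cast
    rfl
  -- Equation E3 : w * Z = w * D + Z
  have E3 : w * Z = w * D + Z := by
    have heo := tsum_even_add_odd (f := fun n : ℕ => 1 / ((n : ℂ) + 1) ^ s)
      (hZs.comp_injective inj2) (hZs.comp_injective inj2')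
    have he : (∑' m : ℕ, 1 / (((2 * m : ℕ) : ℂ) + 1) ^ s) = D :=
      tsum_congr fun m => by push_cast; ring_nf
    have ho : (∑' m : ℕ, 1 / (((2 * m + 1 : ℕ) : ℂ) + 1) ^ s) = w⁻¹ * Z := by
      rw [← tsum_mul_left]
      refine tsum_congr fun m => ?_
      rw [show (((2 * m + 1 : ℕ) : ℂ) + 1) = 2 * (m : ℂ) + 2 by push_cast; ring, hpow m,
        one_div, mul_inv, one_div]
    rw [he, ho] at heo
    have heo' : D + w⁻¹ * Z = Z := heo
    have h : w * (D + w⁻¹ * Z) = w * Z := by rw [heo']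
    rw [mul_add, mul_inv_cancel_left₀ hw] at h
    linear_combination -h
  -- Equation E1 : w * A = w * C + (Z - A)
  have E1 : w * A = w * C + (Z - A) := by
    have heo := tsum_even_add_odd (f := fun n : ℕ => (tm n : ℂ) / ((n : ℂ) + 1) ^ s)
      (hAs.comp_injective inj2) (hAs.comp_injective inj2')
    have he : (∑' m : ℕ, (tm (2 * m) : ℂ) / (((2 * m : ℕ) : ℂ) + 1) ^ s) = C :=
      tsum_congr fun m => by rw [tm_two_mul]; push_cast; ring_nf
    have ho : (∑' m : ℕ, (tm (2 * m + 1) : ℂ) / (((2 * m + 1 : ℕ) : ℂ) + 1) ^ s)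
        = w⁻¹ * (Z - A) := by
      rw [← Summable.tsum_sub hZs hAs, ← tsum_mul_left]
      refine tsum_congr fun m => ?_
      have hne : ((m : ℂ) + 1) ^ s ≠ 0 := by
        rw [Ne, Complex.cpow_eq_zero_iff]
        rintro ⟨h, -⟩
        exact absurd (congrArg Complex.re h) (by simp; positivity)
      rw [show (((2 * m + 1 : ℕ) : ℂ) + 1) = 2 * (m : ℂ) + 2 by push_cast; ring, hpow m,
        tm_cast_odd]
      field_simp
    rw [he, ho] at heo
    have heo' : C + w⁻¹ * (Z - A) = A := heo
    have h : w * (C + w⁻¹ * (Z - A)) = w * A := by rw [heo']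
    rw [mul_add, mul_inv_cancel_left₀ hw] at h
    linear_combination -h
  -- Equation E2 : w * B = w * (D - C) + B
  have E2 : w * B = w * (D - C) + B := by
    have heo := tsum_even_add_odd (f := fun n : ℕ => (tm (n + 1) : ℂ) / ((n : ℂ) + 1) ^ s)
      (hBs.comp_injective inj2) (hBs.comp_injective inj2')
    have hDs : Summable (fun m : ℕ => 1 / (2 * (m : ℂ) + 1) ^ s) :=
      (hZs.comp_injective inj2).congr fun m => by
        simp only [Function.comp]; push_cast; ring_nf
    have hCs : Summable (fun m : ℕ => (tm m : ℂ) / (2 * (m : ℂ) + 1) ^ s) :=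
      (hAs.comp_injective inj2).congr fun m => by
        simp only [Function.comp]; rw [tm_two_mul]; push_cast; ring_nf
    have he : (∑' m : ℕ, (tm (2 * m + 1) : ℂ) / (((2 * m : ℕ) : ℂ) + 1) ^ s) = D - C := by
      rw [← Summable.tsum_sub hDs hCs]
      refine tsum_congr fun m => ?_
      rw [tm_cast_odd]
      push_cast
      rw [sub_div]
    have ho : (∑' m : ℕ, (tm (2 * m + 1 + 1) : ℂ) / (((2 * m + 1 : ℕ) : ℂ) + 1) ^ s)
        = w⁻¹ * B := by
      rw [← tsum_mul_left]
      refine tsum_congr fun m => ?_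
      rw [show (2 * m + 1 + 1) = 2 * (m + 1) by ring, tm_two_mul,
        show (((2 * m + 1 : ℕ) : ℂ) + 1) = 2 * (m : ℂ) + 2 by push_cast; ring, hpow m]
      rw [div_eq_mul_inv, mul_inv, div_eq_mul_inv]
      ring
    rw [he, ho] at heo
    have heo' : (D - C) + w⁻¹ * B = B := heo
    have h : w * ((D - C) + w⁻¹ * B) = w * B := by rw [heo']
    rw [mul_add, mul_inv_cancel_left₀ hw] at h
    linear_combination -h
  have key : (w + 1) * A + (w - 1) * B = w * Z := by linear_combination E1 + E2 - E3
  have hG1 : (∑' n : ℕ, ((tm n : ℂ) - (k : ℂ)) / ((n : ℂ) + 1) ^ s) = A - (k : ℂ) * Z := by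
    rw [hA_def, hZ_def, ← tsum_mul_left, ← Summable.tsum_sub hAs (hZs.mul_left _)]
    exact tsum_congr fun n => by rw [sub_div]; ring
  have hG2 : (∑' n : ℕ, ((tm (n + 1) : ℂ) + (l : ℂ)) / ((n : ℂ) + 1) ^ s)
      = B + (l : ℂ) * Z := by
    rw [hB_def, hZ_def, ← tsum_mul_left, ← Summable.tsum_add hBs (hZs.mul_left _)]
    exact tsum_congr fun n => by rw [add_div]; ring
  rw [hG1, hG2, zeta_eq_tsum_one_div_nat_add_one_cpow hs, ← hZ_def]
  linear_combination key
end

section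
/- Let δ_n = t_n − t_{n−1} for all n ≥ 1. Then for all complex s with Re(s) > 1, ∑_{n≥1} δ_n/n^s = (4^s/(4^s − 1))·∑_{n≥0} ε_n/(2n+1)^s. -/
set_option maxHeartbeats 1000000

open Complex

theorem stmt_18 (s : ℂ) (hs : 1 < s.re) :
    ∑' n : ℕ, ((tm (n + 1) : ℂ) - (tm n : ℂ)) / ((n : ℂ) + 1) ^ s =
      4 ^ s / (4 ^ s - 1) * ∑' n : ℕ, eps n / (2 * (n : ℂ) + 1) ^ s := by
  set f : ℕ → ℂ := fun n => ((tm (n + 1) : ℂ) - (tm n : ℂ)) / ((n : ℂ) + 1) ^ s with hf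
  -- summability
  have hsum : Summable f := by
    apply Summable.of_norm_bounded (g := fun n : ℕ => ((n : ℝ) + 1) ^ (-s.re))
    · have := (Real.summable_one_div_nat_rpow (p := s.re)).mpr hs
      have h2 := (summable_nat_add_iff (f := fun n : ℕ => 1 / (n : ℝ) ^ s.re) 1).mpr this
      refine h2.congr fun n => ?_
      push_cast
      rw [Real.rpow_neg (by positivity), one_div]
    · intro n
      rw [hf]
      simp only [norm_div]
      have hb : ‖((n : ℂ) + 1) ^ s‖ = ((n : ℝ) + 1) ^ s.re := by
        have : ((n : ℂ) + 1) = (((n : ℝ) + 1 : ℝ) : ℂ) := by push_cast; ring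
        rw [this, Complex.norm_cpow_eq_rpow_re_of_pos (by positivity)]
      rw [hb, Real.rpow_neg (by positivity)]
      rw [div_eq_mul_inv]
      refine mul_le_of_le_one_left (by positivity) ?_
      have h1 := tm_lt_two (n + 1)
      have h2 := tm_lt_two n
      interval_cases h : tm (n + 1) <;> interval_cases h' : tm n <;> norm_num
  have hinj2 : Function.Injective (fun k : ℕ => 2 * k) := fun a b h => by simp only at h; omega
  have hinj2' : Function.Injective (fun k : ℕ => 2 * k + 1) := fun a b h => by simp only at h; omega
  have hse : Summable (fun k => f (2 * k)) := hsum.comp_injective hinj2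
  have hso : Summable (fun k => f (2 * k + 1)) := hsum.comp_injective hinj2'
  set g : ℕ → ℂ := fun k => f (2 * k + 1) with hg
  have hsoe : Summable (fun j => g (2 * j)) := hso.comp_injective hinj2
  have hsoo : Summable (fun j => g (2 * j + 1)) := hso.comp_injective hinj2'
  -- even terms are eps
  have heven : ∀ k : ℕ, f (2 * k) = eps k / (2 * (k : ℂ) + 1) ^ s := by
    intro k
    rw [hf]
    simp only
    have hnum : ((tm (2 * k + 1) : ℂ) - (tm (2 * k) : ℂ)) = eps k := by
      rw [tm_two_mul_add_one, tm_two_mul, eps]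
      have := tm_lt_two k
      interval_cases h : tm k <;> norm_num
    have hden : ((2 * k : ℕ) : ℂ) + 1 = 2 * (k : ℂ) + 1 := by push_cast; ring
    rw [hnum, hden]
  -- odd-even terms vanish
  have hoe : ∀ j : ℕ, g (2 * j) = 0 := by
    intro j
    show f (2 * (2 * j) + 1) = 0
    rw [hf]
    simp only
    have h1 : 2 * (2 * j) + 1 + 1 = 2 * (2 * j + 1) := by ring
    have h2 : 2 * (2 * j) + 1 = 2 * (2 * j) + 1 := rfl
    rw [h1, tm_two_mul, tm_two_mul_add_one, tm_two_mul_add_one, tm_two_mul]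
    simp
  -- odd-odd terms are 4^{-s} f j
  have hoo : ∀ j : ℕ, g (2 * j + 1) = ((4 : ℂ) ^ s)⁻¹ * f j := by
    intro j
    show f (2 * (2 * j + 1) + 1) = ((4 : ℂ) ^ s)⁻¹ * f j
    rw [hf]
    simp only
    have h1 : 2 * (2 * j + 1) + 1 + 1 = 2 * (2 * (j + 1)) := by ring
    have h2 : 2 * (2 * j + 1) + 1 = 2 * (2 * j) + 1 + 2 := by ring
    have hnum1 : tm (2 * (2 * j + 1) + 1 + 1) = tm (j + 1) := by
      rw [h1, tm_two_mul, tm_two_mul]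
    have hnum2 : tm (2 * (2 * j + 1) + 1) = tm j := by
      have : 2 * (2 * j + 1) + 1 = 2 * (2 * j + 1) + 1 := rfl
      rw [show 2 * (2 * j + 1) + 1 = 2 * (2 * j + 1) + 1 from rfl]
      rw [tm_two_mul_add_one, tm_two_mul_add_one]
      have := tm_lt_two j
      omega
    have hden : (((2 * (2 * j + 1) + 1 : ℕ) : ℂ) + 1) ^ s = (4 : ℂ) ^ s * ((j : ℂ) + 1) ^ s := by
      have he : (((2 * (2 * j + 1) + 1 : ℕ) : ℂ) + 1) = (((4 : ℝ) : ℂ)) * (((j + 1 : ℝ)) : ℂ) := by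
        push_cast; ring
      rw [he, mul_cpow_ofReal_nonneg (by norm_num) (by positivity)]
      norm_num
    rw [hnum1, hnum2, hden]
    rw [div_eq_mul_inv, div_eq_mul_inv, mul_inv]
    ring
  -- combine
  have hs4 : (4 : ℂ) ^ s ≠ 0 := by
    simp [Complex.cpow_eq_zero_iff]
  have hs41 : (4 : ℂ) ^ s ≠ 1 := by
    intro h
    have habs : ‖(4 : ℂ) ^ s‖ = (4 : ℝ) ^ s.re := by
      rw [show (4 : ℂ) = ((4 : ℝ) : ℂ) by norm_num,
        Complex.norm_cpow_eq_rpow_re_of_pos (by norm_num)]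
    rw [h] at habs
    simp at habs
    have : (1 : ℝ) < (4 : ℝ) ^ s.re :=
      Real.one_lt_rpow_iff_of_pos (by norm_num) |>.mpr (Or.inl ⟨by norm_num, by linarith⟩)
    rw [← habs] at this
    exact absurd this (lt_irrefl _)
  have key1 : (∑' k, f (2 * k)) + ∑' k, f (2 * k + 1) = ∑' n, f n :=
    tsum_even_add_odd hse hso
  have key2 : (∑' j, g (2 * j)) + ∑' j, g (2 * j + 1)
      = ∑' k, g k := tsum_even_add_odd hsoe hsoo
  have hz : (∑' j, g (2 * j)) = 0 := by
    simp only [tsum_congr hoe]; exact tsum_zero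
  have hq : (∑' j, g (2 * j + 1)) = ((4 : ℂ) ^ s)⁻¹ * ∑' n, f n := by
    rw [tsum_congr hoo, tsum_mul_left]
  have hA : (∑' k, f (2 * k)) = ∑' n : ℕ, eps n / (2 * (n : ℂ) + 1) ^ s :=
    tsum_congr heven
  set S := ∑' n, f n with hS
  set A := ∑' n : ℕ, eps n / (2 * (n : ℂ) + 1) ^ s with hA'
  rw [hz, hq, zero_add] at key2
  rw [hg] at key2
  rw [hA, ← key2] at key1
  -- key1 : A + (4^s)⁻¹ * S = S
  have h41 : (4 : ℂ) ^ s - 1 ≠ 0 := sub_ne_zero.mpr hs41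
  field_simp at key1 ⊢
  linear_combination -key1
end

section
/- Let σ_n denote the period-doubling sequence, defined by σ_{2n} = 0, σ_{4n+1} = 1, and σ_{4n+3} = σ_n for all n ≥ 0. Then for all complex s with Re(s) > 1, ∑_{n≥1} σ_n·((4n+3)^s − n^s)/(4n² + 3n)^s = 4^{−s}·ζ(s, 1/4), where ζ(s, a) denotes the Hurwitz zeta function. -/
open Complex

theorem stmt_19 (σ : ℕ → ℕ)
    (h2 : ∀ n, σ (2 * n) = 0) (h1 : ∀ n, σ (4 * n + 1) = 1)
    (h3 : ∀ n, σ (4 * n + 3) = σ n)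
    (s : ℂ) (hs : 1 < s.re) :
    ∑' n : ℕ, (σ (n + 1) : ℂ) *
        ((4 * ((n : ℂ) + 1) + 3) ^ s - ((n : ℂ) + 1) ^ s) /
          (4 * ((n : ℂ) + 1) ^ 2 + 3 * ((n : ℂ) + 1)) ^ s =
      (4 : ℂ) ^ (-s) * HurwitzZeta.hurwitzZeta ((1 / 4 : ℝ) : UnitAddCircle) s := by
  -- σ is {0,1}-valued
  have hσ1 : ∀ n, σ n ≤ 1 := by
    intro n
    induction n using Nat.strong_induction_on with
    | _ n ih =>
      rcases Nat.even_or_odd n with ⟨k, hk⟩ | ⟨k, hk⟩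
      · rw [show n = 2 * k by omega, h2]; omega
      · rcases Nat.even_or_odd k with ⟨j, hj⟩ | ⟨j, hj⟩
        · rw [show n = 4 * j + 1 by omega, h1]
        · rw [show n = 4 * j + 3 by omega, h3]
          exact ih j (by omega)
  have hσeven : ∀ m, m % 2 = 0 → σ m = 0 := by
    intro m hm; rw [show m = 2 * (m / 2) by omega, h2]
  set g : ℕ → ℂ := fun m => (σ m : ℂ) * (m : ℂ) ^ (-s) with hg_def
  -- norm of terms
  have hnorm : ∀ m : ℕ, 0 < m → ‖((m : ℕ) : ℂ) ^ (-s)‖ = (m : ℝ) ^ (-s.re) := by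
    intro m hm
    rw [show ((m : ℕ) : ℂ) = ((m : ℝ) : ℂ) by push_cast; ring,
      Complex.norm_cpow_eq_rpow_re_of_pos (by exact_mod_cast hm)]
    simp
  -- summability comparison
  have hcomp : Summable (fun m : ℕ => ((m : ℝ) + 1) ^ (-s.re)) := by
    have := (Real.summable_one_div_nat_rpow (p := s.re)).mpr hs
    rw [← summable_nat_add_iff 1] at this
    refine this.congr fun m => ?_
    rw [Real.rpow_neg (by positivity), one_div]
    push_cast; ring_nf
  have hbound : ∀ (b : ℕ), 1 ≤ b → ∀ m : ℕ, ‖g (4 * m + b)‖ ≤ ((m : ℝ) + 1) ^ (-s.re) := by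
    intro b hb m
    have h1m : (0:ℝ) < (m:ℝ) + 1 := by positivity
    have h4m : ((m:ℝ) + 1) ≤ ((4 * m + b : ℕ) : ℝ) := by push_cast; linarith [hb, (by exact_mod_cast hb : (1:ℝ) ≤ b)]
    calc ‖g (4 * m + b)‖ = (σ (4 * m + b) : ℝ) * ‖((4 * m + b : ℕ) : ℂ) ^ (-s)‖ := by
          rw [hg_def]; simp [norm_mul]
      _ ≤ 1 * ((4 * m + b : ℕ) : ℝ) ^ (-s.re) := by
          rw [hnorm _ (by omega)]
          apply mul_le_mul_of_nonneg_right (by exact_mod_cast hσ1 _) (by positivity)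
      _ ≤ ((m : ℝ) + 1) ^ (-s.re) := by
          rw [one_mul]
          exact Real.rpow_le_rpow_of_nonpos h1m h4m (by linarith)
  have hB : Summable (fun m : ℕ => g (4 * m + 3)) :=
    Summable.of_norm_bounded hcomp (hbound 3 (by norm_num))
  -- the target series over residue 1 mod 4
  have hζ := HurwitzZeta.hasSum_hurwitzZeta_of_one_lt_re
    (a := (1/4 : ℝ)) ⟨by norm_num, by norm_num⟩ hs
  have hS1 : HasSum (fun k : ℕ => ((4 * k + 1 : ℕ) : ℂ) ^ (-s))
      ((4 : ℂ) ^ (-s) * HurwitzZeta.hurwitzZeta ((1 / 4 : ℝ) : UnitAddCircle) s) := by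
    refine (hζ.mul_left ((4 : ℂ) ^ (-s))).congr_fun fun k => ?_
    have h4 : ((4 * k + 1 : ℕ) : ℂ) = (((4 : ℝ)) : ℂ) * (((k : ℝ) + 1/4 : ℝ) : ℂ) := by
      push_cast; ring
    rw [h4, mul_cpow_ofReal_nonneg (by norm_num) (by positivity)]
    have hne : ((((k : ℝ) + 1/4 : ℝ)) : ℂ) ≠ 0 := by
      simp only [ne_eq, ofReal_eq_zero]; positivity
    simp only [cpow_neg, one_div]
    push_cast
    ring
  set Z : ℂ := (4 : ℂ) ^ (-s) * HurwitzZeta.hurwitzZeta ((1 / 4 : ℝ) : UnitAddCircle) s with hZ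
  set G1 : ℕ → ℂ := fun m => if m % 4 = 1 then g m else 0 with hG1_def
  set G3 : ℕ → ℂ := fun m => if m % 4 = 3 then g m else 0 with hG3_def
  have hinj1 : Function.Injective (fun k : ℕ => 4 * k + 1) := by
    intro a b h
    have h' : 4 * a + 1 = 4 * b + 1 := h
    omega
  have hinj3 : Function.Injective (fun k : ℕ => 4 * k + 3) := by
    intro a b h
    have h' : 4 * a + 3 = 4 * b + 3 := h
    omega
  have hvan1 : ∀ m ∉ Set.range (fun k : ℕ => 4 * k + 1), G1 m = 0 := by
    intro m hm
    show (if m % 4 = 1 then g m else 0) = 0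
    rw [if_neg]
    intro hmod
    exact hm ⟨m / 4, show 4 * (m / 4) + 1 = m by omega⟩
  have hvan3 : ∀ m ∉ Set.range (fun k : ℕ => 4 * k + 3), G3 m = 0 := by
    intro m hm
    show (if m % 4 = 3 then g m else 0) = 0
    rw [if_neg]
    intro hmod
    exact hm ⟨m / 4, show 4 * (m / 4) + 3 = m by omega⟩
  have hG1sum : HasSum G1 Z := by
    rw [← hinj1.hasSum_iff hvan1]
    refine hS1.congr_fun fun k => ?_
    show (if (4 * k + 1) % 4 = 1 then g (4 * k + 1) else 0) = _
    rw [if_pos (by omega), hg_def]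
    simp [h1]
  set B : ℂ := ∑' m : ℕ, g (4 * m + 3) with hB_def
  have hBsum : HasSum (fun m : ℕ => g (4 * m + 3)) B := hB.hasSum
  have hG3sum : HasSum G3 B := by
    rw [← hinj3.hasSum_iff hvan3]
    refine hBsum.congr_fun fun k => ?_
    show (if (4 * k + 3) % 4 = 3 then g (4 * k + 3) else 0) = g (4 * k + 3)
    rw [if_pos (by omega)]
  have hsplit : ∀ m, g m = G1 m + G3 m := by
    intro m
    show g m = (if m % 4 = 1 then g m else 0) + (if m % 4 = 3 then g m else 0)
    rcases (by omega : m % 4 = 0 ∨ m % 4 = 1 ∨ m % 4 = 2 ∨ m % 4 = 3) with h | h | h | h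
    · rw [if_neg (by omega), if_neg (by omega), hg_def]
      simp [hσeven m (by omega)]
    · rw [if_pos h, if_neg (by omega), add_zero]
    · rw [if_neg (by omega), if_neg (by omega), hg_def]
      simp [hσeven m (by omega)]
    · rw [if_neg (by omega), if_pos h, zero_add]
  have hF' : HasSum (fun m : ℕ => g m - g (4 * m + 3)) Z := by
    have h := (hG1sum.add hG3sum).sub hBsum
    rw [add_sub_cancel_right] at h
    exact h.congr_fun fun m => by rw [hsplit m]
  have hF : HasSum (fun n : ℕ => g (n + 1) - g (4 * (n + 1) + 3)) Z := by
    have hvan0 : ∀ m ∉ Set.range (fun n : ℕ => n + 1),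
        (fun m : ℕ => g m - g (4 * m + 3)) m = 0 := by
      intro m hm
      have hm0 : m = 0 := by
        by_contra h
        exact hm ⟨m - 1, show (m - 1) + 1 = m by omega⟩
      subst hm0
      have hσ0 : σ 0 = 0 := h2 0
      have hσ3 : σ 3 = 0 := (h3 0).trans (h2 0)
      have hg0 : g 0 = 0 := by rw [hg_def]; simp [hσ0]
      have hg3 : g 3 = 0 := by rw [hg_def]; simp [hσ3]
      show g 0 - g (4 * 0 + 3) = 0
      norm_num [hg0, hg3]
    have hinj : Function.Injective (fun n : ℕ => n + 1) := by
      intro a b h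
      have h' : a + 1 = b + 1 := h
      omega
    exact (hinj.hasSum_iff hvan0).mpr hF'
  rw [← hF.tsum_eq]
  refine tsum_congr fun n => ?_
  have hden : (4 * ((n : ℂ) + 1) ^ 2 + 3 * ((n : ℂ) + 1)) =
      (((n + 1) * (4 * (n + 1) + 3) : ℕ) : ℂ) := by push_cast; ring
  have hx : ((n : ℂ) + 1) = (((n + 1 : ℕ)) : ℂ) := by push_cast; ring
  have hy : (4 * ((n : ℂ) + 1) + 3) = (((4 * (n + 1) + 3 : ℕ)) : ℂ) := by push_cast; ring
  have hxne : (((n + 1 : ℕ)) : ℂ) ^ s ≠ 0 := by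
    simp only [Ne, cpow_eq_zero_iff, not_and_or]
    left
    exact Nat.cast_ne_zero.mpr (by omega)
  have hyne : (((4 * (n + 1) + 3 : ℕ)) : ℂ) ^ s ≠ 0 := by
    simp only [Ne, cpow_eq_zero_iff, not_and_or]
    left
    exact Nat.cast_ne_zero.mpr (by omega)
  rw [hden, Nat.cast_mul, Complex.natCast_mul_natCast_cpow, hy, hx, hg_def]
  simp only [h3 (n + 1), cpow_neg]
  generalize hXg : ((n + 1 : ℕ) : ℂ) ^ s = X at hxne ⊢
  generalize hYg : ((4 * (n + 1) + 3 : ℕ) : ℂ) ^ s = Y at hyne ⊢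
  field_simp
end
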